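/- arXiv:math/0511304 — 2 statements merged into one kernel-verified Lean document; each statement's English description precedes it below -/
import Mathlib

section
/- Let D be the 4×4 diagonal matrix over the field ℚ(x) with diagonal entries 1/x(x-1), 1/x(x-1)(x-2), 1/x(x-1)(x-2), 1/x(x-1)(x-2)(x-3). Let M be the symmetric 4×4 matrix with entries (writing (x)_k for the falling factorial x(x-1)⋯(x-k+1)): M₁₁=(x)₄, M₁₂=M₁₃=M₂₁=M₃₁=(x)₅, M₁₄=M₄₁=(x)₆, M₂₂=M₂₃=M₃₂=M₃₃=(x)₄+2(x)₅+(x)₆, M₂₄=M₃₄=M₄₂=M₄₃=4(x)₅+4(x)₆+(x)₇, M₄₄=2(x)₄+16(x)₅+20(x)₆+8(x)₇+(x)₈. Then the vector v₁ = (1,-1,-1,1)ᵀ satisfies (MD)v₁ = 2·v₁; i.e., v₁ is an eigenvector of the transfer matrix MD with eigenvalue 2, independent of x. -/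
set_option synthInstance.maxHeartbeats 400000

open Finset Matrix

/-- The falling factorial `(x)ₖ = x(x-1)⋯(x-k+1)` as an element of `ℚ(x)`. -/
noncomputable def ff (k : ℕ) : RatFunc ℚ :=
  ∏ i ∈ Finset.range k, (RatFunc.X - (i : RatFunc ℚ))

/-- The diagonal matrix `D = diag(1/(x)₂, 1/(x)₃, 1/(x)₃, 1/(x)₄)` over `ℚ(x)`. -/
noncomputable def Dmat : Matrix (Fin 4) (Fin 4) (RatFunc ℚ) :=
  Matrix.diagonal ![(ff 2)⁻¹, (ff 3)⁻¹, (ff 3)⁻¹, (ff 4)⁻¹]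

/-- The symmetric colour-transfer matrix `M` of one layer of the width-4
cylindrical triangular lattice. -/
noncomputable def Mmat : Matrix (Fin 4) (Fin 4) (RatFunc ℚ) :=
  !![ff 4, ff 5, ff 5, ff 6;
     ff 5, ff 4 + 2 * ff 5 + ff 6, ff 4 + 2 * ff 5 + ff 6, 4 * ff 5 + 4 * ff 6 + ff 7;
     ff 5, ff 4 + 2 * ff 5 + ff 6, ff 4 + 2 * ff 5 + ff 6, 4 * ff 5 + 4 * ff 6 + ff 7;
     ff 6, 4 * ff 5 + 4 * ff 6 + ff 7, 4 * ff 5 + 4 * ff 6 + ff 7,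
       2 * ff 4 + 16 * ff 5 + 20 * ff 6 + 8 * ff 7 + ff 8]

lemma linfac_ne_zero (i : ℕ) : (RatFunc.X - (i : RatFunc ℚ)) ≠ 0 := by
  intro h
  have h2 : RatFunc.X = RatFunc.C (i : ℚ) := by
    rw [map_natCast RatFunc.C]; exact sub_eq_zero.mp h
  have h3 := congrArg RatFunc.num h2
  simp only [RatFunc.num_X, RatFunc.num_C] at h3
  exact Polynomial.X_ne_C (i : ℚ) h3

lemma ff_ne_zero (k : ℕ) : ff k ≠ 0 := by
  unfold ff
  exact Finset.prod_ne_zero_iff.mpr fun i _ => linfac_ne_zero i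

lemma ff_succ (k : ℕ) : ff (k + 1) = ff k * (RatFunc.X - (k : RatFunc ℚ)) := by
  unfold ff
  rw [Finset.prod_range_succ]

/-- Ratio lemma: `ff (j+d) / ff j = ∏_{i=0}^{d-1} (RatFunc.X - (j+i))`. -/
lemma ff_ratio (j d : ℕ) :
    ff (j + d) * (ff j)⁻¹ =
      ∏ i ∈ Finset.range d, (RatFunc.X - ((j + i : ℕ) : RatFunc ℚ)) := by
  have h : ff (j + d) = ff j * ∏ i ∈ Finset.range d, (RatFunc.X - ((j + i : ℕ) : RatFunc ℚ)) := by
    unfold ff; rw [Finset.prod_range_add]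
  rw [h, mul_comm, ← mul_assoc, inv_mul_cancel₀ (ff_ne_zero j), one_mul]

/-- The vector `v₁ = (1,-1,-1,1)ᵀ` is an eigenvector of the transfer matrix `MD`
with eigenvalue `2`, independent of `x`. -/
theorem transfer_matrix_eigenvalue_two :
    (Mmat * Dmat).mulVec (![1, -1, -1, 1] : Fin 4 → RatFunc ℚ) =
      (2 : RatFunc ℚ) • (![1, -1, -1, 1] : Fin 4 → RatFunc ℚ) := by
  have q42 : ff 4 * (ff 2)⁻¹ = (RatFunc.X - 2) * (RatFunc.X - 3) := by
    have h := ff_ratio 2 2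
    simp only [Finset.prod_range_succ, Finset.prod_range_zero, one_mul] at h
    rw [h]; push_cast; ring
  have q52 : ff 5 * (ff 2)⁻¹ = (RatFunc.X - 2) * (RatFunc.X - 3) * (RatFunc.X - 4) := by
    have h := ff_ratio 2 3
    simp only [Finset.prod_range_succ, Finset.prod_range_zero, one_mul] at h
    rw [h]; push_cast; ring
  have q62 : ff 6 * (ff 2)⁻¹ = (RatFunc.X - 2) * (RatFunc.X - 3) * (RatFunc.X - 4) * (RatFunc.X - 5) := by
    have h := ff_ratio 2 4
    simp only [Finset.prod_range_succ, Finset.prod_range_zero, one_mul] at h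
    rw [h]; push_cast; ring
  have q43 : ff 4 * (ff 3)⁻¹ = (RatFunc.X - 3) := by
    have h := ff_ratio 3 1
    simp only [Finset.prod_range_succ, Finset.prod_range_zero, one_mul] at h
    rw [h]; push_cast; ring
  have q53 : ff 5 * (ff 3)⁻¹ = (RatFunc.X - 3) * (RatFunc.X - 4) := by
    have h := ff_ratio 3 2
    simp only [Finset.prod_range_succ, Finset.prod_range_zero, one_mul] at h
    rw [h]; push_cast; ring
  have q63 : ff 6 * (ff 3)⁻¹ = (RatFunc.X - 3) * (RatFunc.X - 4) * (RatFunc.X - 5) := by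
    have h := ff_ratio 3 3
    simp only [Finset.prod_range_succ, Finset.prod_range_zero, one_mul] at h
    rw [h]; push_cast; ring
  have q73 : ff 7 * (ff 3)⁻¹ = (RatFunc.X - 3) * (RatFunc.X - 4) * (RatFunc.X - 5) * (RatFunc.X - 6) := by
    have h := ff_ratio 3 4
    simp only [Finset.prod_range_succ, Finset.prod_range_zero, one_mul] at h
    rw [h]; push_cast; ring
  have q44 : ff 4 * (ff 4)⁻¹ = 1 := mul_inv_cancel₀ (ff_ne_zero 4)
  have q54 : ff 5 * (ff 4)⁻¹ = (RatFunc.X - 4) := by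
    have h := ff_ratio 4 1
    simp only [Finset.prod_range_succ, Finset.prod_range_zero, one_mul] at h
    rw [h]; push_cast; ring
  have q64 : ff 6 * (ff 4)⁻¹ = (RatFunc.X - 4) * (RatFunc.X - 5) := by
    have h := ff_ratio 4 2
    simp only [Finset.prod_range_succ, Finset.prod_range_zero, one_mul] at h
    rw [h]; push_cast; ring
  have q74 : ff 7 * (ff 4)⁻¹ = (RatFunc.X - 4) * (RatFunc.X - 5) * (RatFunc.X - 6) := by
    have h := ff_ratio 4 3
    simp only [Finset.prod_range_succ, Finset.prod_range_zero, one_mul] at h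
    rw [h]; push_cast; ring
  have q84 : ff 8 * (ff 4)⁻¹ = (RatFunc.X - 4) * (RatFunc.X - 5) * (RatFunc.X - 6) * (RatFunc.X - 7) := by
    have h := ff_ratio 4 4
    simp only [Finset.prod_range_succ, Finset.prod_range_zero, one_mul] at h
    rw [h]; push_cast; ring
  funext i
  fin_cases i
  · simp [Mmat, Dmat, Matrix.mul_apply, Matrix.mulVec, Matrix.diagonal, Fin.sum_univ_four, dotProduct]
    linear_combination q42 - 2 * q53 + q64
  · simp [Mmat, Dmat, Matrix.mul_apply, Matrix.mulVec, Matrix.diagonal, Fin.sum_univ_four, dotProduct]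
    linear_combination q52 - 2 * q43 - 4 * q53 - 2 * q63 + 4 * q54 + 4 * q64 + q74
  · simp [Mmat, Dmat, Matrix.mul_apply, Matrix.mulVec, Matrix.diagonal, Fin.sum_univ_four, dotProduct]
    linear_combination q52 - 2 * q43 - 4 * q53 - 2 * q63 + 4 * q54 + 4 * q64 + q74
  · simp [Mmat, Dmat, Matrix.mul_apply, Matrix.mulVec, Matrix.diagonal, Fin.sum_univ_four, dotProduct]
    linear_combination q62 - 8 * q53 - 8 * q63 - 2 * q73 + 2 * q44 + 16 * q54 +
      20 * q64 + 8 * q74 + q84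
end

section
/- Let A and B be finite graphs with distinguished 4-cycles a₁a₂a₃a₄ and b₁b₂b₃b₄, and let G be the graph obtained by identifying aᵢ with bᵢ for i = 1,…,4. For a positive integer x, the number of proper x-colourings of G equals P₁(A,x)P₁(B,x)/(x)₂ + P₂(A,x)P₂(B,x)/(x)₃ + P₃(A,x)P₃(B,x)/(x)₃ + P₄(A,x)P₄(B,x)/(x)₄, where (x)_k = x(x-1)⋯(x-k+1) and Pᵢ denotes the number of Type-i proper x-colourings with respect to the distinguished 4-cycle. -/
open Finset

/-- The number of proper `x`-colourings of a graph `G` satisfying an extra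
predicate `Q`. -/
noncomputable def ncol {V : Type*} (G : SimpleGraph V) (x : ℕ)
    (Q : (V → ℕ) → Prop) : ℕ :=
  Nat.card {φ : V → ℕ // ((∀ v, φ v < x) ∧ ∀ u w, G.Adj u w → φ u ≠ φ w) ∧ Q φ}

set_option linter.unusedSectionVars false
set_option linter.unusedVariables false
set_option linter.unreachableTactic false
set_option linter.unusedTactic false
set_option maxHeartbeats 1000000

private lemma nat_card_sigma {ι : Type*} [Fintype ι] (f : ι → Type*) [∀ i, Finite (f i)] :
    Nat.card (Σ i, f i) = ∑ i, Nat.card (f i) := by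
  haveI := fun i => Fintype.ofFinite (f i)
  simp [Nat.card_eq_fintype_card]

private lemma card_split {α : Type*} (P Q : α → Prop) [Finite {y : α // P y}] :
    Nat.card {y : α // P y} =
      Nat.card {y : α // P y ∧ Q y} + Nat.card {y : α // P y ∧ ¬ Q y} := by
  classical
  haveI : Finite {y : α // P y ∧ Q y} :=
    Finite.of_injective (fun u => (⟨u.1, u.2.1⟩ : {y // P y}))
      (fun u v h => Subtype.ext (congrArg Subtype.val h : _))
  haveI : Finite {y : α // P y ∧ ¬ Q y} :=
    Finite.of_injective (fun u => (⟨u.1, u.2.1⟩ : {y // P y}))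
      (fun u v h => Subtype.ext (congrArg Subtype.val h : _))
  rw [← Nat.card_sum]
  apply Nat.card_congr
  refine ⟨fun y => if h : Q y.1 then Sum.inl ⟨y.1, y.2, h⟩ else Sum.inr ⟨y.1, y.2, h⟩,
    fun z => Sum.elim (fun u => ⟨u.1, u.2.1⟩) (fun u => ⟨u.1, u.2.1⟩) z, ?_, ?_⟩
  · intro y; by_cases h : Q y.1 <;> simp [h]
  · rintro (u | u) <;> simp [u.2.2]

private lemma exists_perm {k x : ℕ} (f g : Fin k → Fin x)
    (hf : Function.Injective f) (hg : Function.Injective g) :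
    ∃ σ : Equiv.Perm (Fin x), ∀ i, σ (f i) = g i := by
  classical
  have hc : Fintype.card (↥(Set.range f)ᶜ) = Fintype.card (↥(Set.range g)ᶜ) := by
    rw [Fintype.card_compl_set, Fintype.card_compl_set]
    congr 1
    rw [← Fintype.card_congr (Equiv.ofInjective f hf),
      ← Fintype.card_congr (Equiv.ofInjective g hg)]
  refine ⟨(Equiv.Set.sumCompl (Set.range f)).symm.trans
    ((((Equiv.ofInjective f hf).symm.trans (Equiv.ofInjective g hg)).sumCongr
      (Fintype.equivOfCardEq hc)).trans (Equiv.Set.sumCompl (Set.range g))), fun i => ?_⟩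
  have h1 : (Equiv.Set.sumCompl (Set.range f)).symm (f i)
      = Sum.inl ⟨f i, Set.mem_range_self i⟩ :=
    Equiv.Set.sumCompl_symm_apply_of_mem (Set.mem_range_self i)
  simp only [Equiv.trans_apply, h1, Equiv.sumCongr_apply, Sum.map_inl]
  have h2 : (Equiv.ofInjective g hg) ((Equiv.ofInjective f hf).symm
      ⟨f i, Set.mem_range_self i⟩) = ⟨g i, Set.mem_range_self i⟩ := by
    have : (⟨f i, Set.mem_range_self i⟩ : Set.range f) = Equiv.ofInjective f hf i := rfl
    rw [this, Equiv.symm_apply_apply]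
    rfl
  rw [h2]
  exact Equiv.Set.sumCompl_apply_inl _ _

/-- proper colouring predicate -/
private def pcol {V : Type*} (H : SimpleGraph V) (x : ℕ) (φ : V → ℕ) : Prop :=
  (∀ v, φ v < x) ∧ ∀ u w, H.Adj u w → φ u ≠ φ w

private def permNat {x : ℕ} (σ : Equiv.Perm (Fin x)) (n : ℕ) : ℕ :=
  if h : n < x then (σ ⟨n, h⟩ : ℕ) else n

private lemma permNat_lt {x : ℕ} (σ : Equiv.Perm (Fin x)) {n : ℕ} (h : n < x) :
    permNat σ n < x := by
  rw [permNat, dif_pos h]; exact (σ ⟨n, h⟩).2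

private lemma permNat_permNat {x : ℕ} (σ : Equiv.Perm (Fin x)) (n : ℕ) :
    permNat σ.symm (permNat σ n) = n := by
  by_cases h : n < x
  · have h1 : permNat σ n = ((σ ⟨n, h⟩ : Fin x) : ℕ) := dif_pos h
    rw [h1, permNat, dif_pos (σ ⟨n, h⟩).2]
    simp
  · have h1 : permNat σ n = n := dif_neg h
    rw [h1, permNat, dif_neg h]

private lemma permNat_inj {x : ℕ} (σ : Equiv.Perm (Fin x)) :
    Function.Injective (permNat σ) := by
  intro m n h
  have := congrArg (permNat σ.symm) h
  rwa [permNat_permNat, permNat_permNat] at this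

private lemma permNat_coe {x : ℕ} (σ : Equiv.Perm (Fin x)) (c : Fin x) :
    permNat σ (c : ℕ) = (σ c : ℕ) := by
  rw [permNat, dif_pos c.2]

/-- number of proper colourings extending ψ on the cycle -/
private noncomputable def nExt {V : Type*} (H : SimpleGraph V) (x : ℕ) (c : Fin 4 → V)
    (ψ : Fin 4 → Fin x) : ℕ :=
  Nat.card {φ : V → ℕ // pcol H x φ ∧ ∀ j, φ (c j) = (ψ j : ℕ)}

private lemma nExt_congr {V : Type*} (H : SimpleGraph V) (x : ℕ) (c : Fin 4 → V)
    {ψ ψ' : Fin 4 → Fin x} (σ : Equiv.Perm (Fin x)) (hσ : ∀ j, σ (ψ j) = ψ' j) :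
    nExt H x c ψ = nExt H x c ψ' := by
  apply Nat.card_congr
  have key : ∀ (τ : Equiv.Perm (Fin x)) (φ : V → ℕ),
      (pcol H x φ ∧ ∀ j, φ (c j) = (ψ j : ℕ)) →
      pcol H x (permNat τ ∘ φ) := by
    intro τ φ ⟨⟨hb, hadj⟩, _⟩
    exact ⟨fun v => permNat_lt τ (hb v),
      fun u w h hval => hadj u w h (permNat_inj τ hval)⟩
  refine ⟨fun φ => ⟨permNat σ ∘ φ.1, key σ φ.1 φ.2, fun j => ?_⟩,
    fun φ => ⟨permNat σ.symm ∘ φ.1, ?_, fun j => ?_⟩, fun φ => ?_, fun φ => ?_⟩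
  · show permNat σ (φ.1 (c j)) = _
    rw [φ.2.2 j, permNat_coe, hσ j]
  · refine ⟨fun v => permNat_lt _ (φ.2.1.1 v),
      fun u w h hval => φ.2.1.2 u w h (permNat_inj _ hval)⟩
  · show permNat σ.symm (φ.1 (c j)) = _
    rw [φ.2.2 j, ← hσ j, permNat_coe]
    simp
  · apply Subtype.ext; funext v
    show permNat σ.symm (permNat σ (φ.1 v)) = φ.1 v
    exact permNat_permNat σ _
  · apply Subtype.ext; funext v
    show permNat σ (permNat σ.symm (φ.1 v)) = φ.1 v
    have := permNat_permNat σ.symm (φ.1 v)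
    rwa [Equiv.symm_symm] at this

private def good (x : ℕ) (pat2 : Prop → Prop → Prop) (ψ : Fin 4 → Fin x) : Prop :=
  pat2 (ψ 0 = ψ 2) (ψ 1 = ψ 3) ∧ ψ 0 ≠ ψ 1 ∧ ψ 1 ≠ ψ 2 ∧ ψ 2 ≠ ψ 3 ∧ ψ 3 ≠ ψ 0

section
variable {V : Type*} [Fintype V] (H : SimpleGraph V) (x : ℕ) (c : Fin 4 → V)
  (pat2 : Prop → Prop → Prop)

private lemma pat_transfer
    (hcongr : ∀ {p q p' q' : Prop}, (p ↔ p') → (q ↔ q') → (pat2 p q ↔ pat2 p' q'))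
    (φ : V → ℕ) (ψ : Fin 4 → Fin x) (hext : ∀ j, φ (c j) = (ψ j : ℕ)) :
    pat2 (φ (c 0) = φ (c 2)) (φ (c 1) = φ (c 3)) ↔ pat2 (ψ 0 = ψ 2) (ψ 1 = ψ 3) := by
  apply hcongr <;> rw [hext, hext, Fin.val_eq_val]

private lemma restr_good
    (hcyc : ∀ i : Fin 4, H.Adj (c i) (c (i + 1)))
    (hcongr : ∀ {p q p' q' : Prop}, (p ↔ p') → (q ↔ q') → (pat2 p q ↔ pat2 p' q'))
    (φ : V → ℕ) (hp : pcol H x φ)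
    (hpat : pat2 (φ (c 0) = φ (c 2)) (φ (c 1) = φ (c 3)))
    (ψ : Fin 4 → Fin x) (hext : ∀ j, φ (c j) = (ψ j : ℕ)) :
    good x pat2 ψ := by
  have hne : ∀ i : Fin 4, ψ i ≠ ψ (i + 1) := by
    intro i hcontra
    exact hp.2 _ _ (hcyc i) (by rw [hext i, hext (i + 1), hcontra])
  refine ⟨(pat_transfer x c pat2 hcongr φ ψ hext).mp hpat, ?_, ?_, ?_, ?_⟩
  · exact hne 0
  · exact hne 1
  · exact hne 2
  · have := hne 3
    simpa using this
end

private lemma nat_card_sigma' {ι : Type*} [Fintype ι] (f : ι → Type*) [∀ i, Finite (f i)] :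
    Nat.card (Σ i, f i) = ∑ i, Nat.card (f i) := by
  haveI := fun i => Fintype.ofFinite (f i)
  simp [Nat.card_eq_fintype_card]

private lemma finite_col {V : Type*} [Finite V] {x : ℕ} {P : (V → ℕ) → Prop}
    (h : ∀ φ, P φ → ∀ v, φ v < x) : Finite {φ : V → ℕ // P φ} := by
  apply Finite.of_injective (fun u => (fun v => (⟨u.1 v, h u.1 u.2 v⟩ : Fin x)))
  intro u1 u2 he
  apply Subtype.ext; funext v
  exact congrArg Fin.val (congrFun he v)

open scoped Classical in
private lemma card_pat_sum {V : Type*} [Fintype V] (H : SimpleGraph V) (x : ℕ)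
    (c : Fin 4 → V) (hcyc : ∀ i : Fin 4, H.Adj (c i) (c (i + 1)))
    (pat2 : Prop → Prop → Prop)
    (hcongr : ∀ {p q p' q' : Prop}, (p ↔ p') → (q ↔ q') → (pat2 p q ↔ pat2 p' q')) :
    Nat.card {φ : V → ℕ // pcol H x φ ∧
        pat2 (φ (c 0) = φ (c 2)) (φ (c 1) = φ (c 3))} =
      ∑ ψ : Fin 4 → Fin x, if good x pat2 ψ then nExt H x c ψ else 0 := by
  haveI : ∀ ψ : Fin 4 → Fin x, Finite {φ : V → ℕ //
      (pcol H x φ ∧ pat2 (φ (c 0) = φ (c 2)) (φ (c 1) = φ (c 3))) ∧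
        ∀ j, φ (c j) = (ψ j : ℕ)} :=
    fun ψ => finite_col (fun φ h v => h.1.1.1 v)
  have E : {φ : V → ℕ // pcol H x φ ∧ pat2 (φ (c 0) = φ (c 2)) (φ (c 1) = φ (c 3))} ≃
      Σ ψ : Fin 4 → Fin x, {φ : V → ℕ //
        (pcol H x φ ∧ pat2 (φ (c 0) = φ (c 2)) (φ (c 1) = φ (c 3))) ∧
          ∀ j, φ (c j) = (ψ j : ℕ)} := by
    refine ⟨fun u => ⟨fun j => (⟨u.1 (c j), u.2.1.1 (c j)⟩ : Fin x), u.1, u.2, fun j => rfl⟩,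
      fun p => ⟨p.2.1, p.2.2.1⟩, fun u => rfl, ?_⟩
    rintro ⟨ψ, φ, hφ, hext⟩
    have hr : (fun j => (⟨φ (c j), hφ.1.1 (c j)⟩ : Fin x)) = ψ :=
      funext fun j => Fin.ext (hext j)
    subst hr
    rfl
  rw [Nat.card_congr E, nat_card_sigma']
  apply Finset.sum_congr rfl
  intro ψ _
  by_cases hg : good x pat2 ψ
  · rw [if_pos hg]
    apply Nat.card_congr
    apply Equiv.subtypeEquivRight
    intro φ
    constructor
    · rintro ⟨⟨h1, _⟩, h2⟩; exact ⟨h1, h2⟩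
    · rintro ⟨h1, h2⟩
      exact ⟨⟨h1, (pat_transfer x c pat2 hcongr φ ψ h2).mpr hg.1⟩, h2⟩
  · rw [if_neg hg]
    rw [Nat.card_eq_zero]
    left
    constructor
    rintro ⟨φ, ⟨hp, hpat⟩, hext⟩
    exact hg (restr_good H x c pat2 hcyc hcongr φ hp hpat ψ hext)

open scoped Classical in
private lemma card_pairs_sum {VA VB : Type*} [Fintype VA] [Fintype VB]
    (A : SimpleGraph VA) (B : SimpleGraph VB) (a : Fin 4 → VA) (b : Fin 4 → VB)
    (hcycA : ∀ i : Fin 4, A.Adj (a i) (a (i + 1))) (x : ℕ)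
    (pat2 : Prop → Prop → Prop)
    (hcongr : ∀ {p q p' q' : Prop}, (p ↔ p') → (q ↔ q') → (pat2 p q ↔ pat2 p' q')) :
    Nat.card {p : (VA → ℕ) × (VB → ℕ) //
        (pcol A x p.1 ∧ pcol B x p.2 ∧ ∀ i : Fin 4, p.1 (a i) = p.2 (b i)) ∧
          pat2 (p.1 (a 0) = p.1 (a 2)) (p.1 (a 1) = p.1 (a 3))} =
      ∑ ψ : Fin 4 → Fin x,
        if good x pat2 ψ then nExt A x a ψ * nExt B x b ψ else 0 := by
  haveI : ∀ ψ : Fin 4 → Fin x, Finite {p : (VA → ℕ) × (VB → ℕ) //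
      ((pcol A x p.1 ∧ pcol B x p.2 ∧ ∀ i : Fin 4, p.1 (a i) = p.2 (b i)) ∧
        pat2 (p.1 (a 0) = p.1 (a 2)) (p.1 (a 1) = p.1 (a 3))) ∧
        ∀ j, p.1 (a j) = (ψ j : ℕ)} := by
    intro ψ
    apply Finite.of_injective (fun u =>
      ((fun v => (⟨u.1.1 v, u.2.1.1.1.1 v⟩ : Fin x)),
       (fun v => (⟨u.1.2 v, u.2.1.1.2.1.1 v⟩ : Fin x))))
    intro u1 u2 he
    apply Subtype.ext
    have h1 := congrArg Prod.fst he
    have h2 := congrArg Prod.snd he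
    refine Prod.ext (funext fun v => ?_) (funext fun v => ?_)
    · exact congrArg Fin.val (congrFun h1 v)
    · exact congrArg Fin.val (congrFun h2 v)
  have E : {p : (VA → ℕ) × (VB → ℕ) //
      (pcol A x p.1 ∧ pcol B x p.2 ∧ ∀ i : Fin 4, p.1 (a i) = p.2 (b i)) ∧
        pat2 (p.1 (a 0) = p.1 (a 2)) (p.1 (a 1) = p.1 (a 3))} ≃
      Σ ψ : Fin 4 → Fin x, {p : (VA → ℕ) × (VB → ℕ) //
        ((pcol A x p.1 ∧ pcol B x p.2 ∧ ∀ i : Fin 4, p.1 (a i) = p.2 (b i)) ∧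
          pat2 (p.1 (a 0) = p.1 (a 2)) (p.1 (a 1) = p.1 (a 3))) ∧
          ∀ j, p.1 (a j) = (ψ j : ℕ)} := by
    refine ⟨fun u => ⟨fun j => (⟨u.1.1 (a j), u.2.1.1.1 (a j)⟩ : Fin x), u.1, u.2, fun j => rfl⟩,
      fun p => ⟨p.2.1, p.2.2.1⟩, fun u => rfl, ?_⟩
    rintro ⟨ψ, p, hp, hext⟩
    have hr : (fun j => (⟨p.1 (a j), hp.1.1.1 (a j)⟩ : Fin x)) = ψ :=
      funext fun j => Fin.ext (hext j)
    subst hr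
    rfl
  rw [Nat.card_congr E, nat_card_sigma']
  apply Finset.sum_congr rfl
  intro ψ _
  by_cases hg : good x pat2 ψ
  · rw [if_pos hg]
    unfold nExt
    rw [← Nat.card_prod]
    apply Nat.card_congr
    refine ⟨fun u => (⟨u.1.1, u.2.1.1.1, fun j => u.2.2 j⟩,
        ⟨u.1.2, u.2.1.1.2.1, fun j => by rw [← u.2.1.1.2.2 j, u.2.2 j]⟩),
      fun v => ⟨(v.1.1, v.2.1), ⟨⟨v.1.2.1, v.2.2.1, fun j => by show v.1.1 (a j) = v.2.1 (b j); rw [v.1.2.2 j, v.2.2.2 j]⟩, ?_⟩,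
        fun j => v.1.2.2 j⟩, fun u => rfl, fun v => rfl⟩
    
    exact (pat_transfer x a pat2 hcongr v.1.1 ψ v.1.2.2).mpr hg.1
  · rw [if_neg hg, Nat.card_eq_zero]
    left
    constructor
    rintro ⟨p, ⟨⟨hpA, _, _⟩, hpat⟩, hext⟩
    exact hg (restr_good A x a pat2 hcycA hcongr p.1 hpA hpat ψ hext)

private def goodRep {x m : ℕ} (ρ : Fin 4 → Fin m) (sec : Fin m → Fin 4)
    (ψ : Fin 4 → Fin x) : Prop :=
  Function.Injective (fun i => ψ (sec i)) ∧ ∀ j, ψ j = ψ (sec (ρ j))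

private def goodEquiv {x m : ℕ} (pat2 : Prop → Prop → Prop)
    (ρ : Fin 4 → Fin m) (sec : Fin m → Fin 4) (hsec : ∀ i, ρ (sec i) = i)
    (hgood : ∀ ψ : Fin 4 → Fin x, good x pat2 ψ ↔ goodRep ρ sec ψ) :
    {ψ : Fin 4 → Fin x // good x pat2 ψ} ≃ (Fin m ↪ Fin x) where
  toFun u := ⟨fun i => u.1 (sec i), ((hgood u.1).mp u.2).1⟩
  invFun e := ⟨fun j => e (ρ j), (hgood _).mpr
    ⟨fun i j h => by
      have h2 : e (ρ (sec i)) = e (ρ (sec j)) := h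
      have h3 := e.injective h2
      rwa [hsec, hsec] at h3,
     fun j => by show e (ρ j) = e (ρ (sec (ρ j))); rw [hsec]⟩⟩
  left_inv u := Subtype.ext (funext fun j => (((hgood u.1).mp u.2).2 j).symm)
  right_inv e := by
    apply DFunLike.ext
    intro i
    show e (ρ (sec i)) = e i
    rw [hsec]

open scoped Classical in
private lemma good_card {x m : ℕ} (pat2 : Prop → Prop → Prop)
    (ρ : Fin 4 → Fin m) (sec : Fin m → Fin 4) (hsec : ∀ i, ρ (sec i) = i)
    (hgood : ∀ ψ : Fin 4 → Fin x, good x pat2 ψ ↔ goodRep ρ sec ψ) :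
    (univ.filter (good x pat2)).card = x.descFactorial m := by
  rw [← Fintype.card_subtype]
  rw [Fintype.card_congr (goodEquiv pat2 ρ sec hsec hgood)]
  rw [Fintype.card_embedding_eq]
  simp

private lemma good_perm {x m : ℕ} (pat2 : Prop → Prop → Prop)
    (ρ : Fin 4 → Fin m) (sec : Fin m → Fin 4) (hsec : ∀ i, ρ (sec i) = i)
    (hgood : ∀ ψ : Fin 4 → Fin x, good x pat2 ψ ↔ goodRep ρ sec ψ)
    (ψ ψ' : Fin 4 → Fin x) (h : good x pat2 ψ) (h' : good x pat2 ψ') :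
    ∃ σ : Equiv.Perm (Fin x), ∀ j, σ (ψ j) = ψ' j := by
  obtain ⟨hinj, hrep⟩ := (hgood ψ).mp h
  obtain ⟨hinj', hrep'⟩ := (hgood ψ').mp h'
  obtain ⟨σ, hσ⟩ := exists_perm _ _ hinj hinj'
  exact ⟨σ, fun j => by rw [hrep j, hrep' j]; exact hσ (ρ j)⟩

private lemma hgoodTT {x : ℕ} (ψ : Fin 4 → Fin x) :
    good x (fun p q => p ∧ q) ψ ↔ goodRep ![0, 1, 0, 1] ![0, 1] ψ := by
  unfold good goodRep
  constructor
  · rintro ⟨⟨h02, h13⟩, h01, h12, h23, h30⟩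
    constructor
    · intro i j hij
      fin_cases i <;> fin_cases j <;> simp_all
    · intro j
      fin_cases j <;> simp_all
  · rintro ⟨hinj, hrep⟩
    have r0 := hrep 0
    have r1 := hrep 1
    have r2 := hrep 2
    have r3 := hrep 3
    simp only [show ((![0,1] (![0,1,0,1] (0:Fin 4))) : Fin 4) = 0 from rfl,
      show ((![0,1] (![0,1,0,1] (1:Fin 4))) : Fin 4) = 1 from rfl,
      show ((![0,1] (![0,1,0,1] (2:Fin 4))) : Fin 4) = 0 from rfl,
      show ((![0,1] (![0,1,0,1] (3:Fin 4))) : Fin 4) = 1 from rfl] at r0 r1 r2 r3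
    have h01 : ψ 0 ≠ ψ 1 := by
      intro h
      have : (0 : Fin 2) = 1 := hinj (show ψ (![0,1] 0) = ψ (![0,1] 1) by simpa using h)
      exact absurd this (by decide)
    refine ⟨⟨r2.symm, r3.symm⟩, h01, ?_, ?_, ?_⟩
    · rw [r2]; exact fun h => h01 h.symm
    · rw [r2, r3]; exact h01
    · rw [r3]; exact fun h => h01 h.symm

private lemma hgoodTF {x : ℕ} (ψ : Fin 4 → Fin x) :
    good x (fun p q => p ∧ ¬q) ψ ↔ goodRep ![0, 1, 0, 2] ![0, 1, 3] ψ := by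
  unfold good goodRep
  constructor
  · rintro ⟨⟨h02, h13⟩, h01, h12, h23, h30⟩
    constructor
    · intro i j hij
      fin_cases i <;> fin_cases j <;> simp_all <;> tauto
    · intro j
      fin_cases j <;> simp_all
  · rintro ⟨hinj, hrep⟩
    have r2 := hrep 2
    simp only [show ((![0,1,3] (![0,1,0,2] (2:Fin 4))) : Fin 4) = 0 from rfl] at r2
    have key : ∀ i j : Fin 3, i ≠ j → ψ (![0,1,3] i) ≠ ψ (![0,1,3] j) :=
      fun i j hne h => hne (hinj h)
    have h01 : ψ 0 ≠ ψ 1 := key 0 1 (by decide)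
    have h03 : ψ 0 ≠ ψ 3 := key 0 2 (by decide)
    have h13 : ψ 1 ≠ ψ 3 := key 1 2 (by decide)
    refine ⟨⟨r2.symm, h13⟩, h01, ?_, ?_, ?_⟩
    · rw [r2]; exact fun h => h01 h.symm
    · rw [r2]; exact h03
    · exact fun h => h03 h.symm

private lemma hgoodFT {x : ℕ} (ψ : Fin 4 → Fin x) :
    good x (fun p q => ¬p ∧ q) ψ ↔ goodRep ![0, 1, 2, 1] ![0, 1, 2] ψ := by
  unfold good goodRep
  constructor
  · rintro ⟨⟨h02, h13⟩, h01, h12, h23, h30⟩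
    constructor
    · intro i j hij
      fin_cases i <;> fin_cases j <;> simp_all <;> tauto
    · intro j
      fin_cases j <;> simp_all
  · rintro ⟨hinj, hrep⟩
    have r3 := hrep 3
    simp only [show ((![0,1,2] (![0,1,2,1] (3:Fin 4))) : Fin 4) = 1 from rfl] at r3
    have key : ∀ i j : Fin 3, i ≠ j → ψ (![0,1,2] i) ≠ ψ (![0,1,2] j) :=
      fun i j hne h => hne (hinj h)
    have h01 : ψ 0 ≠ ψ 1 := key 0 1 (by decide)
    have h02 : ψ 0 ≠ ψ 2 := key 0 2 (by decide)
    have h12 : ψ 1 ≠ ψ 2 := key 1 2 (by decide)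
    refine ⟨⟨h02, r3.symm⟩, h01, h12, ?_, ?_⟩
    · rw [r3]; exact fun h => h12 h.symm
    · rw [r3]; exact fun h => h01 h.symm

private lemma hgoodFF {x : ℕ} (ψ : Fin 4 → Fin x) :
    good x (fun p q => ¬p ∧ ¬q) ψ ↔ goodRep ![0, 1, 2, 3] ![0, 1, 2, 3] ψ := by
  unfold good goodRep
  constructor
  · rintro ⟨⟨h02, h13⟩, h01, h12, h23, h30⟩
    constructor
    · intro i j hij
      fin_cases i <;> fin_cases j <;> simp_all <;> tauto
    · intro j
      fin_cases j <;> simp_all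
  · rintro ⟨hinj, hrep⟩
    have key : ∀ i j : Fin 4, i ≠ j → ψ (![0,1,2,3] i) ≠ ψ (![0,1,2,3] j) :=
      fun i j hne h => hne (hinj h)
    have h01 : ψ 0 ≠ ψ 1 := key 0 1 (by decide)
    have h02 : ψ 0 ≠ ψ 2 := key 0 2 (by decide)
    have h12 : ψ 1 ≠ ψ 2 := key 1 2 (by decide)
    have h13 : ψ 1 ≠ ψ 3 := key 1 3 (by decide)
    have h23 : ψ 2 ≠ ψ 3 := key 2 3 (by decide)
    have h03 : ψ 0 ≠ ψ 3 := key 0 3 (by decide)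
    exact ⟨⟨h02, h13⟩, h01, h12, h23, fun h => h03 h.symm⟩

private lemma sum_div_key {α : Type*} [Fintype α] (p : α → Prop) [DecidablePred p]
    (fA fB : α → ℕ)
    (hA : ∀ s t, p s → p t → fA s = fA t) (hB : ∀ s t, p s → p t → fB s = fB t) :
    ((∑ s, if p s then fA s * fB s else 0 : ℕ) : ℚ) =
      ((∑ s, if p s then fA s else 0 : ℕ) : ℚ) *
        ((∑ s, if p s then fB s else 0 : ℕ) : ℚ) /
          ((univ.filter p).card : ℚ) := by
  by_cases hne : ∃ s, p s
  · obtain ⟨s₀, hs₀⟩ := hne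
    have hN : 0 < (univ.filter p).card :=
      card_pos.mpr ⟨s₀, mem_filter.mpr ⟨mem_univ _, hs₀⟩⟩
    have eA : (∑ s, if p s then fA s else 0) = (univ.filter p).card * fA s₀ := by
      rw [← Finset.sum_filter]
      rw [Finset.sum_congr rfl (fun s hs => hA s s₀ (mem_filter.mp hs).2 hs₀)]
      rw [Finset.sum_const, smul_eq_mul]
    have eB : (∑ s, if p s then fB s else 0) = (univ.filter p).card * fB s₀ := by
      rw [← Finset.sum_filter]
      rw [Finset.sum_congr rfl (fun s hs => hB s s₀ (mem_filter.mp hs).2 hs₀)]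
      rw [Finset.sum_const, smul_eq_mul]
    have eP : (∑ s, if p s then fA s * fB s else 0) =
        (univ.filter p).card * (fA s₀ * fB s₀) := by
      rw [← Finset.sum_filter]
      rw [Finset.sum_congr rfl (fun s hs => by
        rw [hA s s₀ (mem_filter.mp hs).2 hs₀, hB s s₀ (mem_filter.mp hs).2 hs₀])]
      rw [Finset.sum_const, smul_eq_mul]
    rw [eA, eB, eP]
    have hN' : ((univ.filter p).card : ℚ) ≠ 0 := Nat.cast_ne_zero.mpr hN.ne'
    push_cast
    field_simp
  · push_neg at hne
    simp [hne]

private lemma descFactorial_cast (x k : ℕ) :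
    ((x.descFactorial k : ℕ) : ℚ) = ∏ i ∈ range k, ((x : ℚ) - i) := by
  rcases le_or_gt k x with h | h
  · rw [Nat.descFactorial_eq_prod_range, Nat.cast_prod]
    apply Finset.prod_congr rfl
    intro i hi
    rw [Nat.cast_sub (le_of_lt (lt_of_lt_of_le (mem_range.mp hi) h))]
  · rw [Nat.descFactorial_eq_zero_iff_lt.mpr h, Nat.cast_zero]
    symm
    apply Finset.prod_eq_zero (mem_range.mpr h)
    simp


/-- Gluing formula: if `G` is obtained from `A` and `B` by identifying the
distinguished 4-cycles `a₀a₁a₂a₃` and `b₀b₁b₂b₃` vertexwise, then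
`P(G,x) = ∑ᵢ Pᵢ(A,x)Pᵢ(B,x)/(x)_{sᵢ}` where `s = (2,3,3,4)`. -/
theorem gluing_formula {VA VB : Type*} [Fintype VA] [Fintype VB]
    (A : SimpleGraph VA) (B : SimpleGraph VB)
    (a : Fin 4 → VA) (b : Fin 4 → VB)
    (ha : Function.Injective a) (hb : Function.Injective b)
    (hcycA : ∀ i : Fin 4, A.Adj (a i) (a (i + 1)))
    (hcycB : ∀ i : Fin 4, B.Adj (b i) (b (i + 1)))
    -- the relation generating the identification `a i ~ b i`
    (r : VA ⊕ VB → VA ⊕ VB → Prop)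
    (hr : r = fun s t => ∃ i : Fin 4, s = Sum.inl (a i) ∧ t = Sum.inr (b i))
    -- the glued graph on the quotient vertex set
    (G : SimpleGraph (Quot r))
    (hG : G = SimpleGraph.fromRel (fun q₁ q₂ =>
      (∃ u w, A.Adj u w ∧ q₁ = Quot.mk r (Sum.inl u) ∧ q₂ = Quot.mk r (Sum.inl w)) ∨
      (∃ u w, B.Adj u w ∧ q₁ = Quot.mk r (Sum.inr u) ∧ q₂ = Quot.mk r (Sum.inr w))))
    (x : ℕ) (hx : 0 < x) :
    (ncol G x (fun _ => True) : ℚ) =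
      (ncol A x (fun φ => φ (a 0) = φ (a 2) ∧ φ (a 1) = φ (a 3)) *
        ncol B x (fun φ => φ (b 0) = φ (b 2) ∧ φ (b 1) = φ (b 3)) : ℚ) /
          (∏ i ∈ Finset.range 2, ((x : ℚ) - i)) +
      (ncol A x (fun φ => φ (a 0) = φ (a 2) ∧ φ (a 1) ≠ φ (a 3)) *
        ncol B x (fun φ => φ (b 0) = φ (b 2) ∧ φ (b 1) ≠ φ (b 3)) : ℚ) /
          (∏ i ∈ Finset.range 3, ((x : ℚ) - i)) +
      (ncol A x (fun φ => φ (a 0) ≠ φ (a 2) ∧ φ (a 1) = φ (a 3)) *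
        ncol B x (fun φ => φ (b 0) ≠ φ (b 2) ∧ φ (b 1) = φ (b 3)) : ℚ) /
          (∏ i ∈ Finset.range 3, ((x : ℚ) - i)) +
      (ncol A x (fun φ => φ (a 0) ≠ φ (a 2) ∧ φ (a 1) ≠ φ (a 3)) *
        ncol B x (fun φ => φ (b 0) ≠ φ (b 2) ∧ φ (b 1) ≠ φ (b 3)) : ℚ) /
          (∏ i ∈ Finset.range 4, ((x : ℚ) - i)) := by
  classical
  -- normal form on the quotient
  set nf : VA ⊕ VB → VA ⊕ VB := fun s => Sum.rec (fun u => Sum.inl u)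
    (fun v => if h : ∃ i, b i = v then Sum.inl (a h.choose) else Sum.inr v) s with hnf
  have nf_resp : ∀ s t, r s t → nf s = nf t := by
    intro s t hst
    rw [hr] at hst
    obtain ⟨i, rfl, rfl⟩ := hst
    show Sum.inl (a i) =
      if h : ∃ j, b j = b i then Sum.inl (a h.choose) else Sum.inr (b i)
    rw [dif_pos ⟨i, rfl⟩]
    rw [show (⟨i, rfl⟩ : ∃ j, b j = b i).choose = i from
      hb (⟨i, rfl⟩ : ∃ j, b j = b i).choose_spec]
  have k1 : ∀ u u' : VA,
      Quot.mk r (Sum.inl u) = Quot.mk r (Sum.inl u') → u = u' := by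
    intro u u' h
    have h2 : nf (Sum.inl u) = nf (Sum.inl u') := congrArg (Quot.lift nf nf_resp) h
    exact Sum.inl.inj h2
  have k3 : ∀ (u : VA) (v : VB),
      Quot.mk r (Sum.inl u) = Quot.mk r (Sum.inr v) → ∃ i, u = a i ∧ v = b i := by
    intro u v h
    have h2 : nf (Sum.inl u) = nf (Sum.inr v) := congrArg (Quot.lift nf nf_resp) h
    by_cases h1 : ∃ i, b i = v
    · rw [show nf (Sum.inr v) = Sum.inl (a h1.choose) from dif_pos h1] at h2
      exact ⟨h1.choose, Sum.inl.inj h2, h1.choose_spec.symm⟩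
    · rw [show nf (Sum.inr v) = Sum.inr v from dif_neg h1] at h2
      exact absurd h2 (by simp)
  have k2 : ∀ v v' : VB,
      Quot.mk r (Sum.inr v) = Quot.mk r (Sum.inr v') → v = v' := by
    intro v v' h
    have h2 : nf (Sum.inr v) = nf (Sum.inr v') := congrArg (Quot.lift nf nf_resp) h
    by_cases h1 : ∃ i, b i = v <;> by_cases h1' : ∃ i, b i = v'
    · rw [show nf (Sum.inr v) = Sum.inl (a h1.choose) from dif_pos h1,
        show nf (Sum.inr v') = Sum.inl (a h1'.choose) from dif_pos h1'] at h2
      have := ha (Sum.inl.inj h2)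
      rw [← h1.choose_spec, ← h1'.choose_spec, this]
    · rw [show nf (Sum.inr v) = Sum.inl (a h1.choose) from dif_pos h1,
        show nf (Sum.inr v') = Sum.inr v' from dif_neg h1'] at h2
      exact absurd h2 (by simp)
    · rw [show nf (Sum.inr v) = Sum.inr v from dif_neg h1,
        show nf (Sum.inr v') = Sum.inl (a h1'.choose) from dif_pos h1'] at h2
      exact absurd h2 (by simp)
    · rw [show nf (Sum.inr v) = Sum.inr v from dif_neg h1,
        show nf (Sum.inr v') = Sum.inr v' from dif_neg h1'] at h2
      exact Sum.inr.inj h2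
  have k4 : ∀ i : Fin 4,
      Quot.mk r (Sum.inl (a i)) = Quot.mk r (Sum.inr (b i)) :=
    fun i => Quot.sound (by rw [hr]; exact ⟨i, rfl, rfl⟩)
  -- the correspondence between colourings of G and matching pairs
  have E : {φ : Quot r → ℕ //
        ((∀ v, φ v < x) ∧ ∀ u w, G.Adj u w → φ u ≠ φ w) ∧ True} ≃
      {p : (VA → ℕ) × (VB → ℕ) //
        pcol A x p.1 ∧ pcol B x p.2 ∧ ∀ i : Fin 4, p.1 (a i) = p.2 (b i)} := by
    refine ⟨fun φ => ⟨(fun u => φ.1 (Quot.mk r (Sum.inl u)),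
        fun v => φ.1 (Quot.mk r (Sum.inr v))), ?_, ?_, ?_⟩,
      fun p => ⟨Quot.lift (Sum.elim p.1.1 p.1.2) ?_, ⟨?_, ?_⟩, trivial⟩, ?_, ?_⟩
    · refine ⟨fun u => φ.2.1.1 _, fun u w hadj hval => ?_⟩
      refine φ.2.1.2 _ _ ?_ hval
      rw [hG, SimpleGraph.fromRel_adj]
      exact ⟨fun hq => hadj.ne (k1 _ _ hq), Or.inl (Or.inl ⟨u, w, hadj, rfl, rfl⟩)⟩
    · refine ⟨fun v => φ.2.1.1 _, fun u w hadj hval => ?_⟩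
      refine φ.2.1.2 _ _ ?_ hval
      rw [hG, SimpleGraph.fromRel_adj]
      exact ⟨fun hq => hadj.ne (k2 _ _ hq), Or.inl (Or.inr ⟨u, w, hadj, rfl, rfl⟩)⟩
    · exact fun i => congrArg φ.1 (k4 i)
    · intro s t hst
      rw [hr] at hst
      obtain ⟨i, rfl, rfl⟩ := hst
      exact p.2.2.2 i
    · intro q
      obtain ⟨s, rfl⟩ := Quot.exists_rep q
      cases s with
      | inl u => exact p.2.1.1 u
      | inr v => exact p.2.2.1.1 v
    · intro q1 q2 hadj hval
      rw [hG, SimpleGraph.fromRel_adj] at hadj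
      obtain ⟨hne, hc⟩ := hadj
      rcases hc with (⟨u, w, huw, rfl, rfl⟩ | ⟨u, w, huw, rfl, rfl⟩) |
        (⟨u, w, huw, rfl, rfl⟩ | ⟨u, w, huw, rfl, rfl⟩)
      · exact p.2.1.2 u w huw hval
      · exact p.2.2.1.2 u w huw hval
      · exact p.2.1.2 u w huw hval.symm
      · exact p.2.2.1.2 u w huw hval.symm
    · intro φ
      apply Subtype.ext
      funext q
      obtain ⟨s, rfl⟩ := Quot.exists_rep q
      cases s <;> rfl
    · intro p
      apply Subtype.ext
      rfl
  have step1 : ncol G x (fun _ => True) = Nat.card {p : (VA → ℕ) × (VB → ℕ) //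
      pcol A x p.1 ∧ pcol B x p.2 ∧ ∀ i : Fin 4, p.1 (a i) = p.2 (b i)} := Nat.card_congr E
  have FQ : ∀ Q : (VA → ℕ) × (VB → ℕ) → Prop, Finite {p : (VA → ℕ) × (VB → ℕ) //
      (pcol A x p.1 ∧ pcol B x p.2 ∧ ∀ i : Fin 4, p.1 (a i) = p.2 (b i)) ∧ Q p} := by
    intro Q
    apply Finite.of_injective (fun u =>
      ((fun v => (⟨u.1.1 v, u.2.1.1.1 v⟩ : Fin x)),
       (fun v => (⟨u.1.2 v, u.2.1.2.1.1 v⟩ : Fin x))))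
    intro u1 u2 he
    apply Subtype.ext
    refine Prod.ext (funext fun v => ?_) (funext fun v => ?_)
    · exact congrArg Fin.val (congrFun (congrArg Prod.fst he) v)
    · exact congrArg Fin.val (congrFun (congrArg Prod.snd he) v)
  haveI F0 : Finite {p : (VA → ℕ) × (VB → ℕ) // pcol A x p.1 ∧ pcol B x p.2 ∧ ∀ i : Fin 4, p.1 (a i) = p.2 (b i)} := by
    have := FQ (fun _ => True)
    exact Finite.of_injective (fun u => (⟨u.1, u.2, trivial⟩ :
      {p : (VA → ℕ) × (VB → ℕ) // (pcol A x p.1 ∧ pcol B x p.2 ∧ ∀ i : Fin 4, p.1 (a i) = p.2 (b i)) ∧ True}))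
      (fun u1 u2 he => Subtype.ext (congrArg Subtype.val he : _))
  haveI F1 := FQ (fun p => p.1 (a 0) = p.1 (a 2))
  haveI F2 := FQ (fun p => ¬ p.1 (a 0) = p.1 (a 2))
  have s1 := card_split (fun p : (VA → ℕ) × (VB → ℕ) => pcol A x p.1 ∧ pcol B x p.2 ∧ ∀ i : Fin 4, p.1 (a i) = p.2 (b i))
    (fun p => p.1 (a 0) = p.1 (a 2))
  have s2 := card_split (fun p : (VA → ℕ) × (VB → ℕ) => (pcol A x p.1 ∧ pcol B x p.2 ∧ ∀ i : Fin 4, p.1 (a i) = p.2 (b i)) ∧ p.1 (a 0) = p.1 (a 2))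
    (fun p => p.1 (a 1) = p.1 (a 3))
  have s3 := card_split (fun p : (VA → ℕ) × (VB → ℕ) => (pcol A x p.1 ∧ pcol B x p.2 ∧ ∀ i : Fin 4, p.1 (a i) = p.2 (b i)) ∧ ¬ p.1 (a 0) = p.1 (a 2))
    (fun p => p.1 (a 1) = p.1 (a 3))
  rw [s2, s3] at s1
  have aTT : Nat.card {p : (VA → ℕ) × (VB → ℕ) // ((pcol A x p.1 ∧ pcol B x p.2 ∧ ∀ i : Fin 4, p.1 (a i) = p.2 (b i)) ∧ p.1 (a 0) = p.1 (a 2)) ∧ p.1 (a 1) = p.1 (a 3)}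
      = Nat.card {p : (VA → ℕ) × (VB → ℕ) // (pcol A x p.1 ∧ pcol B x p.2 ∧ ∀ i : Fin 4, p.1 (a i) = p.2 (b i)) ∧ (p.1 (a 0) = p.1 (a 2) ∧ p.1 (a 1) = p.1 (a 3))} :=
    Nat.card_congr (Equiv.subtypeEquivRight (fun p => by tauto))
  have aTF : Nat.card {p : (VA → ℕ) × (VB → ℕ) // ((pcol A x p.1 ∧ pcol B x p.2 ∧ ∀ i : Fin 4, p.1 (a i) = p.2 (b i)) ∧ p.1 (a 0) = p.1 (a 2)) ∧ ¬ p.1 (a 1) = p.1 (a 3)}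
      = Nat.card {p : (VA → ℕ) × (VB → ℕ) // (pcol A x p.1 ∧ pcol B x p.2 ∧ ∀ i : Fin 4, p.1 (a i) = p.2 (b i)) ∧ (p.1 (a 0) = p.1 (a 2) ∧ ¬ p.1 (a 1) = p.1 (a 3))} :=
    Nat.card_congr (Equiv.subtypeEquivRight (fun p => by tauto))
  have aFT : Nat.card {p : (VA → ℕ) × (VB → ℕ) // ((pcol A x p.1 ∧ pcol B x p.2 ∧ ∀ i : Fin 4, p.1 (a i) = p.2 (b i)) ∧ ¬ p.1 (a 0) = p.1 (a 2)) ∧ p.1 (a 1) = p.1 (a 3)}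
      = Nat.card {p : (VA → ℕ) × (VB → ℕ) // (pcol A x p.1 ∧ pcol B x p.2 ∧ ∀ i : Fin 4, p.1 (a i) = p.2 (b i)) ∧ (¬ p.1 (a 0) = p.1 (a 2) ∧ p.1 (a 1) = p.1 (a 3))} :=
    Nat.card_congr (Equiv.subtypeEquivRight (fun p => by tauto))
  have aFF : Nat.card {p : (VA → ℕ) × (VB → ℕ) // ((pcol A x p.1 ∧ pcol B x p.2 ∧ ∀ i : Fin 4, p.1 (a i) = p.2 (b i)) ∧ ¬ p.1 (a 0) = p.1 (a 2)) ∧ ¬ p.1 (a 1) = p.1 (a 3)}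
      = Nat.card {p : (VA → ℕ) × (VB → ℕ) // (pcol A x p.1 ∧ pcol B x p.2 ∧ ∀ i : Fin 4, p.1 (a i) = p.2 (b i)) ∧ (¬ p.1 (a 0) = p.1 (a 2) ∧ ¬ p.1 (a 1) = p.1 (a 3))} :=
    Nat.card_congr (Equiv.subtypeEquivRight (fun p => by tauto))
  rw [aTT, aTF, aFT, aFF] at s1
  have hcongrTT : ∀ {p q p' q' : Prop}, (p ↔ p') → (q ↔ q') →
      (((fun p q => p ∧ q) p q) ↔ ((fun p q => p ∧ q) p' q')) := by
    intro p q p' q' h1 h2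
    simp only []
    rw [h1, h2]
  have constATT : ∀ s t, good x (fun p q => p ∧ q) s → good x (fun p q => p ∧ q) t →
      nExt A x a s = nExt A x a t := fun s t hs ht =>
    (good_perm _ ![0, 1, 0, 1] ![0, 1] (by decide) hgoodTT s t hs ht).elim
      (fun σ hσ => nExt_congr A x a σ hσ)
  have constBTT : ∀ s t, good x (fun p q => p ∧ q) s → good x (fun p q => p ∧ q) t →
      nExt B x b s = nExt B x b t := fun s t hs ht =>
    (good_perm _ ![0, 1, 0, 1] ![0, 1] (by decide) hgoodTT s t hs ht).elim
      (fun σ hσ => nExt_congr B x b σ hσ)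
  have NTT : (univ.filter (good x (fun p q => p ∧ q))).card = x.descFactorial 2 :=
    good_card _ ![0, 1, 0, 1] ![0, 1] (by decide) hgoodTT
  have qTT : (Nat.card {p : (VA → ℕ) × (VB → ℕ) // (pcol A x p.1 ∧ pcol B x p.2 ∧ ∀ i : Fin 4, p.1 (a i) = p.2 (b i)) ∧ (p.1 (a 0) = p.1 (a 2) ∧ p.1 (a 1) = p.1 (a 3))} : ℚ)
      = (ncol A x (fun φ => φ (a 0) = φ (a 2) ∧ φ (a 1) = φ (a 3)) * ncol B x (fun φ => φ (b 0) = φ (b 2) ∧ φ (b 1) = φ (b 3)) : ℚ) /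
          (∏ i ∈ Finset.range 2, ((x : ℚ) - i)) := by
    have e1 : ncol A x (fun φ => φ (a 0) = φ (a 2) ∧ φ (a 1) = φ (a 3)) =
        ∑ ψ : Fin 4 → Fin x, if good x (fun p q => p ∧ q) ψ then nExt A x a ψ else 0 :=
      card_pat_sum A x a hcycA (fun p q => p ∧ q) hcongrTT
    have e2 : ncol B x (fun φ => φ (b 0) = φ (b 2) ∧ φ (b 1) = φ (b 3)) =
        ∑ ψ : Fin 4 → Fin x, if good x (fun p q => p ∧ q) ψ then nExt B x b ψ else 0 :=
      card_pat_sum B x b hcycB (fun p q => p ∧ q) hcongrTT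
    have e3 : Nat.card {p : (VA → ℕ) × (VB → ℕ) // (pcol A x p.1 ∧ pcol B x p.2 ∧ ∀ i : Fin 4, p.1 (a i) = p.2 (b i)) ∧ (p.1 (a 0) = p.1 (a 2) ∧ p.1 (a 1) = p.1 (a 3))} =
        ∑ ψ : Fin 4 → Fin x,
          if good x (fun p q => p ∧ q) ψ then nExt A x a ψ * nExt B x b ψ else 0 :=
      card_pairs_sum A B a b hcycA x (fun p q => p ∧ q) hcongrTT
    rw [e3, sum_div_key (good x (fun p q => p ∧ q)) (nExt A x a) (nExt B x b) constATT constBTT,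
      ← e1, ← e2, NTT, descFactorial_cast]
  have hcongrTF : ∀ {p q p' q' : Prop}, (p ↔ p') → (q ↔ q') →
      (((fun p q => p ∧ ¬q) p q) ↔ ((fun p q => p ∧ ¬q) p' q')) := by
    intro p q p' q' h1 h2
    simp only []
    rw [h1, h2]
  have constATF : ∀ s t, good x (fun p q => p ∧ ¬q) s → good x (fun p q => p ∧ ¬q) t →
      nExt A x a s = nExt A x a t := fun s t hs ht =>
    (good_perm _ ![0, 1, 0, 2] ![0, 1, 3] (by decide) hgoodTF s t hs ht).elim
      (fun σ hσ => nExt_congr A x a σ hσ)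
  have constBTF : ∀ s t, good x (fun p q => p ∧ ¬q) s → good x (fun p q => p ∧ ¬q) t →
      nExt B x b s = nExt B x b t := fun s t hs ht =>
    (good_perm _ ![0, 1, 0, 2] ![0, 1, 3] (by decide) hgoodTF s t hs ht).elim
      (fun σ hσ => nExt_congr B x b σ hσ)
  have NTF : (univ.filter (good x (fun p q => p ∧ ¬q))).card = x.descFactorial 3 :=
    good_card _ ![0, 1, 0, 2] ![0, 1, 3] (by decide) hgoodTF
  have qTF : (Nat.card {p : (VA → ℕ) × (VB → ℕ) // (pcol A x p.1 ∧ pcol B x p.2 ∧ ∀ i : Fin 4, p.1 (a i) = p.2 (b i)) ∧ (p.1 (a 0) = p.1 (a 2) ∧ ¬ p.1 (a 1) = p.1 (a 3))} : ℚ)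
      = (ncol A x (fun φ => φ (a 0) = φ (a 2) ∧ φ (a 1) ≠ φ (a 3)) * ncol B x (fun φ => φ (b 0) = φ (b 2) ∧ φ (b 1) ≠ φ (b 3)) : ℚ) /
          (∏ i ∈ Finset.range 3, ((x : ℚ) - i)) := by
    have e1 : ncol A x (fun φ => φ (a 0) = φ (a 2) ∧ φ (a 1) ≠ φ (a 3)) =
        ∑ ψ : Fin 4 → Fin x, if good x (fun p q => p ∧ ¬q) ψ then nExt A x a ψ else 0 :=
      card_pat_sum A x a hcycA (fun p q => p ∧ ¬q) hcongrTF
    have e2 : ncol B x (fun φ => φ (b 0) = φ (b 2) ∧ φ (b 1) ≠ φ (b 3)) =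
        ∑ ψ : Fin 4 → Fin x, if good x (fun p q => p ∧ ¬q) ψ then nExt B x b ψ else 0 :=
      card_pat_sum B x b hcycB (fun p q => p ∧ ¬q) hcongrTF
    have e3 : Nat.card {p : (VA → ℕ) × (VB → ℕ) // (pcol A x p.1 ∧ pcol B x p.2 ∧ ∀ i : Fin 4, p.1 (a i) = p.2 (b i)) ∧ (p.1 (a 0) = p.1 (a 2) ∧ ¬ p.1 (a 1) = p.1 (a 3))} =
        ∑ ψ : Fin 4 → Fin x,
          if good x (fun p q => p ∧ ¬q) ψ then nExt A x a ψ * nExt B x b ψ else 0 :=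
      card_pairs_sum A B a b hcycA x (fun p q => p ∧ ¬q) hcongrTF
    rw [e3, sum_div_key (good x (fun p q => p ∧ ¬q)) (nExt A x a) (nExt B x b) constATF constBTF,
      ← e1, ← e2, NTF, descFactorial_cast]
  have hcongrFT : ∀ {p q p' q' : Prop}, (p ↔ p') → (q ↔ q') →
      (((fun p q => ¬p ∧ q) p q) ↔ ((fun p q => ¬p ∧ q) p' q')) := by
    intro p q p' q' h1 h2
    simp only []
    rw [h1, h2]
  have constAFT : ∀ s t, good x (fun p q => ¬p ∧ q) s → good x (fun p q => ¬p ∧ q) t →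
      nExt A x a s = nExt A x a t := fun s t hs ht =>
    (good_perm _ ![0, 1, 2, 1] ![0, 1, 2] (by decide) hgoodFT s t hs ht).elim
      (fun σ hσ => nExt_congr A x a σ hσ)
  have constBFT : ∀ s t, good x (fun p q => ¬p ∧ q) s → good x (fun p q => ¬p ∧ q) t →
      nExt B x b s = nExt B x b t := fun s t hs ht =>
    (good_perm _ ![0, 1, 2, 1] ![0, 1, 2] (by decide) hgoodFT s t hs ht).elim
      (fun σ hσ => nExt_congr B x b σ hσ)
  have NFT : (univ.filter (good x (fun p q => ¬p ∧ q))).card = x.descFactorial 3 :=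
    good_card _ ![0, 1, 2, 1] ![0, 1, 2] (by decide) hgoodFT
  have qFT : (Nat.card {p : (VA → ℕ) × (VB → ℕ) // (pcol A x p.1 ∧ pcol B x p.2 ∧ ∀ i : Fin 4, p.1 (a i) = p.2 (b i)) ∧ (¬ p.1 (a 0) = p.1 (a 2) ∧ p.1 (a 1) = p.1 (a 3))} : ℚ)
      = (ncol A x (fun φ => φ (a 0) ≠ φ (a 2) ∧ φ (a 1) = φ (a 3)) * ncol B x (fun φ => φ (b 0) ≠ φ (b 2) ∧ φ (b 1) = φ (b 3)) : ℚ) /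
          (∏ i ∈ Finset.range 3, ((x : ℚ) - i)) := by
    have e1 : ncol A x (fun φ => φ (a 0) ≠ φ (a 2) ∧ φ (a 1) = φ (a 3)) =
        ∑ ψ : Fin 4 → Fin x, if good x (fun p q => ¬p ∧ q) ψ then nExt A x a ψ else 0 :=
      card_pat_sum A x a hcycA (fun p q => ¬p ∧ q) hcongrFT
    have e2 : ncol B x (fun φ => φ (b 0) ≠ φ (b 2) ∧ φ (b 1) = φ (b 3)) =
        ∑ ψ : Fin 4 → Fin x, if good x (fun p q => ¬p ∧ q) ψ then nExt B x b ψ else 0 :=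
      card_pat_sum B x b hcycB (fun p q => ¬p ∧ q) hcongrFT
    have e3 : Nat.card {p : (VA → ℕ) × (VB → ℕ) // (pcol A x p.1 ∧ pcol B x p.2 ∧ ∀ i : Fin 4, p.1 (a i) = p.2 (b i)) ∧ (¬ p.1 (a 0) = p.1 (a 2) ∧ p.1 (a 1) = p.1 (a 3))} =
        ∑ ψ : Fin 4 → Fin x,
          if good x (fun p q => ¬p ∧ q) ψ then nExt A x a ψ * nExt B x b ψ else 0 :=
      card_pairs_sum A B a b hcycA x (fun p q => ¬p ∧ q) hcongrFT
    rw [e3, sum_div_key (good x (fun p q => ¬p ∧ q)) (nExt A x a) (nExt B x b) constAFT constBFT,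
      ← e1, ← e2, NFT, descFactorial_cast]
  have hcongrFF : ∀ {p q p' q' : Prop}, (p ↔ p') → (q ↔ q') →
      (((fun p q => ¬p ∧ ¬q) p q) ↔ ((fun p q => ¬p ∧ ¬q) p' q')) := by
    intro p q p' q' h1 h2
    simp only []
    rw [h1, h2]
  have constAFF : ∀ s t, good x (fun p q => ¬p ∧ ¬q) s → good x (fun p q => ¬p ∧ ¬q) t →
      nExt A x a s = nExt A x a t := fun s t hs ht =>
    (good_perm _ ![0, 1, 2, 3] ![0, 1, 2, 3] (by decide) hgoodFF s t hs ht).elim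
      (fun σ hσ => nExt_congr A x a σ hσ)
  have constBFF : ∀ s t, good x (fun p q => ¬p ∧ ¬q) s → good x (fun p q => ¬p ∧ ¬q) t →
      nExt B x b s = nExt B x b t := fun s t hs ht =>
    (good_perm _ ![0, 1, 2, 3] ![0, 1, 2, 3] (by decide) hgoodFF s t hs ht).elim
      (fun σ hσ => nExt_congr B x b σ hσ)
  have NFF : (univ.filter (good x (fun p q => ¬p ∧ ¬q))).card = x.descFactorial 4 :=
    good_card _ ![0, 1, 2, 3] ![0, 1, 2, 3] (by decide) hgoodFF
  have qFF : (Nat.card {p : (VA → ℕ) × (VB → ℕ) // (pcol A x p.1 ∧ pcol B x p.2 ∧ ∀ i : Fin 4, p.1 (a i) = p.2 (b i)) ∧ (¬ p.1 (a 0) = p.1 (a 2) ∧ ¬ p.1 (a 1) = p.1 (a 3))} : ℚ)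
      = (ncol A x (fun φ => φ (a 0) ≠ φ (a 2) ∧ φ (a 1) ≠ φ (a 3)) * ncol B x (fun φ => φ (b 0) ≠ φ (b 2) ∧ φ (b 1) ≠ φ (b 3)) : ℚ) /
          (∏ i ∈ Finset.range 4, ((x : ℚ) - i)) := by
    have e1 : ncol A x (fun φ => φ (a 0) ≠ φ (a 2) ∧ φ (a 1) ≠ φ (a 3)) =
        ∑ ψ : Fin 4 → Fin x, if good x (fun p q => ¬p ∧ ¬q) ψ then nExt A x a ψ else 0 :=
      card_pat_sum A x a hcycA (fun p q => ¬p ∧ ¬q) hcongrFF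
    have e2 : ncol B x (fun φ => φ (b 0) ≠ φ (b 2) ∧ φ (b 1) ≠ φ (b 3)) =
        ∑ ψ : Fin 4 → Fin x, if good x (fun p q => ¬p ∧ ¬q) ψ then nExt B x b ψ else 0 :=
      card_pat_sum B x b hcycB (fun p q => ¬p ∧ ¬q) hcongrFF
    have e3 : Nat.card {p : (VA → ℕ) × (VB → ℕ) // (pcol A x p.1 ∧ pcol B x p.2 ∧ ∀ i : Fin 4, p.1 (a i) = p.2 (b i)) ∧ (¬ p.1 (a 0) = p.1 (a 2) ∧ ¬ p.1 (a 1) = p.1 (a 3))} =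
        ∑ ψ : Fin 4 → Fin x,
          if good x (fun p q => ¬p ∧ ¬q) ψ then nExt A x a ψ * nExt B x b ψ else 0 :=
      card_pairs_sum A B a b hcycA x (fun p q => ¬p ∧ ¬q) hcongrFF
    rw [e3, sum_div_key (good x (fun p q => ¬p ∧ ¬q)) (nExt A x a) (nExt B x b) constAFF constBFF,
      ← e1, ← e2, NFF, descFactorial_cast]
  rw [step1, s1]
  push_cast
  rw [qTT, qTF, qFT, qFF]

  ring
end
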